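/- arXiv:1407.8380 — 2 statements merged into one kernel-verified Lean document; each statement's English description precedes it below -/
import Mathlib

section
/- If the system ẋ = f(x,u) is semi-globally asymptotically stabilizable by sampled-data feedback (SDF-SGAS), then it is weakly globally asymptotically stabilizable by sampled-data feedback (SDF-WGAS). -/
/-!
Sample uniformly with step `τ` and, from the initial state `x₀`, run the semi-global
controller built for the radius `max ‖x₀‖ 1`. Attractivity is inherited from that controller.
Every `x₀` with `‖x₀‖ ≤ 1` uses the same controller (the one for radius `1`), so stability
near the origin is inherited from it as well.
-/

open MeasureTheory Filter Set

noncomputable section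

/-- `Euc n` is the Euclidean state space `ℝⁿ`. -/
abbrev Euc (n : ℕ) : Type := EuclideanSpace ℝ (Fin n)

/-- A control is admissible if it is measurable and locally essentially bounded. -/
def AdmissibleControl {U : Type*} [NormedAddCommGroup U] [MeasurableSpace U]
    (u : ℝ → U) : Prop :=
  Measurable u ∧ ∀ T : ℝ, ∃ C : ℝ, ∀ᵐ t ∂(volume.restrict (Icc (-T) T)), ‖u t‖ ≤ C

/-- `x` is a (Carathéodory) solution of `ẋ = f(x, u(t))` with `x s = x₀`, on `[s, b]`. -/
def IsSolOn {n : ℕ} {U : Type*} (f : Euc n → U → Euc n) (u : ℝ → U) (s : ℝ)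
    (x₀ : Euc n) (x : ℝ → Euc n) (b : ℝ) : Prop :=
  ∀ t ∈ Icc s b, x t = x₀ + ∫ τ in s..t, f (x τ) (u τ)

/-- `x` is a (Carathéodory) solution of `ẋ = f(x, u(t))` with `x s = x₀`, on `[s, ∞)`. -/
def IsSolGlobal {n : ℕ} {U : Type*} (f : Euc n → U → Euc n) (u : ℝ → U) (s : ℝ)
    (x₀ : Euc n) (x : ℝ → Euc n) : Prop :=
  ∀ t, s ≤ t → x t = x₀ + ∫ τ in s..t, f (x τ) (u τ)

/-- Weak global asymptotic stabilizability by (time-varying) sampled-data feedback. -/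
def SDF_WGAS {n : ℕ} {U : Type*} [NormedAddCommGroup U] [MeasurableSpace U]
    (f : Euc n → U → Euc n) : Prop :=
  ∀ τ : ℝ, 0 < τ →
    ∃ (T : Euc n → ℝ) (k : ℝ → Euc n → Euc n → U),
      (∀ x : Euc n, x ≠ 0 → 0 < T x ∧ T x ≤ τ) ∧
      (∀ x x₀ : Euc n, AdmissibleControl (fun t => k t x x₀)) ∧
      ∃ (traj : Euc n → ℝ → Euc n) (ts : Euc n → ℕ → ℝ),
        (∀ x₀ : Euc n, x₀ ≠ 0 →
          ts x₀ 0 = 0 ∧ StrictMono (ts x₀) ∧ Tendsto (ts x₀) atTop atTop ∧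
          traj x₀ 0 = x₀ ∧
          (∀ i : ℕ, ts x₀ (i + 1) - ts x₀ i = T (traj x₀ (ts x₀ i))) ∧
          (∀ i : ℕ, ∀ t ∈ Ico (ts x₀ i) (ts x₀ (i + 1)),
            traj x₀ t = traj x₀ (ts x₀ i) +
              ∫ τ' in (ts x₀ i)..t, f (traj x₀ τ') (k τ' (traj x₀ (ts x₀ i)) x₀)) ∧
          Tendsto (traj x₀) atTop (nhds 0)) ∧
        (∀ ε : ℝ, 0 < ε → ∃ δ : ℝ, 0 < δ ∧
          ∀ x₀ : Euc n, x₀ ≠ 0 → ‖x₀‖ ≤ δ → ∀ t : ℝ, 0 ≤ t → ‖traj x₀ t‖ ≤ ε)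

/-- Semi-global asymptotic stabilizability by sampled-data feedback. -/
def SDF_SGAS {n : ℕ} {U : Type*} [NormedAddCommGroup U] [MeasurableSpace U]
    (f : Euc n → U → Euc n) : Prop :=
  ∀ R : ℝ, 0 < R → ∀ Ts : ℕ → ℝ, Ts 0 = 0 → StrictMono Ts → Tendsto Ts atTop atTop →
    ∃ (P : Set (Euc n)) (k : ℝ → Euc n → U),
      P ∈ nhds (0 : Euc n) ∧ Metric.closedBall (0 : Euc n) R ⊆ P ∧
      (∀ x : Euc n, AdmissibleControl (fun t => k t x)) ∧
      ∃ traj : Euc n → ℝ → Euc n,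
        (∀ x₀ ∈ P, traj x₀ 0 = x₀ ∧
          (∀ i : ℕ, ∀ t ∈ Ico (Ts i) (Ts (i + 1)),
            traj x₀ t = traj x₀ (Ts i) +
              ∫ τ' in (Ts i)..t, f (traj x₀ τ') (k τ' (traj x₀ (Ts i)))) ∧
          Tendsto (traj x₀) atTop (nhds 0)) ∧
        (∀ ε : ℝ, 0 < ε → ∃ δ : ℝ, 0 < δ ∧
          ∀ x₀ ∈ P, ‖x₀‖ ≤ δ → ∀ t : ℝ, 0 ≤ t → ‖traj x₀ t‖ ≤ ε)

lemma strictMono_mul_const_natCast {τ : ℝ} (hτ : 0 < τ) : StrictMono fun i : ℕ => (i : ℝ) * τ :=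
  fun _ _ hab => mul_lt_mul_of_pos_right (Nat.cast_lt.mpr hab) hτ

lemma tendsto_mul_const_natCast_atTop {τ : ℝ} (hτ : 0 < τ) :
    Tendsto (fun i : ℕ => (i : ℝ) * τ) atTop atTop :=
  tendsto_natCast_atTop_atTop.atTop_mul_const hτ

theorem SDF_SGAS.sdf_wgas {n : ℕ} {U : Type*} [NormedAddCommGroup U] [MeasurableSpace U]
    {f : Euc n → U → Euc n} (hSGAS : SDF_SGAS f) : SDF_WGAS f := by
  intro τ hτ
  set Ts : ℕ → ℝ := fun i => (i : ℝ) * τ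
  have hTs0 : Ts 0 = 0 := by simp [Ts]
  choose P k _ hball hadm traj htraj hstab using fun r : ℝ =>
    hSGAS (max r 1) (lt_max_of_lt_right one_pos) Ts hTs0
      (strictMono_mul_const_natCast hτ) (tendsto_mul_const_natCast_atTop hτ)
  have mem_P : ∀ {r : ℝ} {x₀ : Euc n}, ‖x₀‖ ≤ r → x₀ ∈ P r := fun hx₀ =>
    hball _ (by simpa using le_max_of_le_left hx₀)
  refine ⟨fun _ => τ, fun t x x₀ => k (max ‖x₀‖ 1) t x, fun _ _ => ⟨hτ, le_rfl⟩,
    fun x x₀ => hadm _ x, fun x₀ => traj (max ‖x₀‖ 1) x₀, fun _ => Ts, ?_, ?_⟩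
  · intro x₀ _
    obtain ⟨h0, hsol, hlim⟩ := htraj _ x₀ (mem_P (le_max_left _ _))
    refine ⟨hTs0, strictMono_mul_const_natCast hτ, tendsto_mul_const_natCast_atTop hτ, h0,
      fun i => ?_, hsol, hlim⟩
    simp only [Ts]
    push_cast
    ring
  · intro ε hε
    obtain ⟨δ, hδ, hst⟩ := hstab 1 ε hε
    refine ⟨min δ 1, lt_min hδ one_pos, fun x₀ _ hx₀ t ht => ?_⟩
    have hx₀_le_one : ‖x₀‖ ≤ 1 := hx₀.trans (min_le_right _ _)
    simp only [max_eq_right hx₀_le_one]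
    exact hst x₀ (mem_P hx₀_le_one) (hx₀.trans (min_le_left _ _)) t ht

theorem stmt4_general {n m : ℕ} (f : Euc n → Euc m → Euc n)
    (hSGAS : SDF_SGAS f) :
    SDF_WGAS f :=
  hSGAS.sdf_wgas

/-- SDF-SGAS implies SDF-WGAS. -/
theorem stmt4 {n m : ℕ} (f : Euc n → Euc m → Euc n)
    (hLip : ∃ K : NNReal, LipschitzWith K (Function.uncurry f))
    (hf0 : f 0 0 = 0)
    (hSGAS : SDF_SGAS f) :
    SDF_WGAS f :=
  stmt4_general f hSGAS
end
end

section
/- Consider the three-dimensional system with f(x)=(x₂α(x₃),−x₁β(x₃),0)ᵀ, g(x)=(0,0,1)ᵀ, where α,β∈C²(ℝ,ℝ) satisfy α(0)=β(0)≠0 and α′(0)≠β′(0), and let V(x)=½(x₁²+x₂²+x₃²). Then for every x≠0 with x₃=0: (gV)(x)=0, (fV)(x)=0, (f²V)(x)=0 and (f³V)(x)=0; moreover, if ([f,g]V)(x)=0 then ([[g,f],f]V)(x)≠0. -/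
open MeasureTheory Filter Set

noncomputable section

/-- Vector fields on `ℝⁿ`. -/
abbrev VF (n : ℕ) : Type := Euc n → Euc n

/-- `(XV)(x) := DV(x)·X(x)`, the derivative of `V` along the vector field `X`. -/
def vfD {n : ℕ} (X : VF n) (V : Euc n → ℝ) : Euc n → ℝ := fun x => fderiv ℝ V x (X x)

/-- Lie bracket `[X,Y] := (DY)X − (DX)Y`. -/
def lieB {n : ℕ} (X Y : VF n) : VF n := fun x => fderiv ℝ Y x (X x) - fderiv ℝ X x (Y x)

/-- `iterD X V i = XⁱV`, with `X⁰V = V` and `X^{i+1}V = X(XⁱV)`. -/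
def iterD {n : ℕ} (X : VF n) (V : Euc n → ℝ) : ℕ → (Euc n → ℝ)
  | 0 => V
  | i + 1 => vfD X (iterD X V i)

/-- `applyVFs [Δ₁, …, Δ_k] V = Δ₁Δ₂⋯Δ_kV`. -/
def applyVFs {n : ℕ} : List (VF n) → (Euc n → ℝ) → (Euc n → ℝ)
  | [], V => V
  | X :: L, V => vfD X (applyVFs L V)

/-- `adIter X Y N = [[…[[X,Y],Y],…,Y],Y]` (`N` iterated brackets with `Y`). -/
def adIter {n : ℕ} (X Y : VF n) : ℕ → VF n
  | 0 => X
  | k + 1 => lieB (adIter X Y k) Y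

/-- `Lk f g i` is the subspace `L_{i+1}` of the paper:
`L₁ = span{f,g}` and `L_{i+1} = span{[X,Y] : X ∈ L_i, Y ∈ L₁}`. -/
def Lk {n : ℕ} (f g : VF n) : ℕ → Submodule ℝ (VF n)
  | 0 => Submodule.span ℝ {f, g}
  | i + 1 => Submodule.span ℝ
      {Z : VF n | ∃ X ∈ Lk f g i, ∃ Y ∈ Submodule.span ℝ ({f, g} : Set (VF n)), Z = lieB X Y}

/-- The Lie algebra generated by `{f, g}` (the span of all the `L_i`). -/
def LieGen {n : ℕ} (f g : VF n) : Submodule ℝ (VF n) := ⨆ i : ℕ, Lk f g i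

/-- `hasOrder f g Δ k` : `Δ` has order `k` with respect to `{f,g}`:
order `1` iff `Δ ∈ L₁ \ {0}`; order `k > 1` iff `Δ = Δ₁ + Δ₂` with
`Δ₁ ∈ L_k \ {0}` and `Δ₂ ∈ span{∪_{i=1}^{k-1} L_i}`. -/
def hasOrder {n : ℕ} (f g : VF n) (Δ : VF n) : ℕ → Prop
  | 0 => False
  | 1 => Δ ∈ Lk f g 0 ∧ Δ ≠ 0
  | k + 2 => ∃ Δ₁ Δ₂ : VF n, Δ₁ ∈ Lk f g (k + 1) ∧ Δ₁ ≠ 0 ∧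
      Δ₂ ∈ (⨆ i ∈ Finset.range (k + 1), Lk f g i) ∧ Δ = Δ₁ + Δ₂

/-- `(Δ₁Δ₂⋯Δ_kV)(x) = 0` for all `Δ₁,…,Δ_k ∈ Lie{f,g} ∖ {g}` with
`Σ_p order_{{f,g}} Δ_p ≤ N`. -/
def LieCondZero {n : ℕ} (f g : VF n) (V : Euc n → ℝ) (x : Euc n) (N : ℕ) : Prop :=
  ∀ (Δs : List (VF n)) (os : List ℕ), Δs ≠ [] → Δs.length = os.length →
    (∀ p ∈ List.zip Δs os, p.1 ∈ LieGen f g ∧ p.1 ≠ g ∧ hasOrder f g p.1 p.2) →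
    os.sum ≤ N → applyVFs Δs V x = 0

/-- The drift vector field `f(x) = (x₂α(x₃), −x₁β(x₃), 0)ᵀ` of the 3D example. -/
def exF (α β : ℝ → ℝ) : VF 3 :=
  fun x => (EuclideanSpace.equiv (Fin 3) ℝ).symm ![x 1 * α (x 2), -(x 0 * β (x 2)), 0]

/-- The control vector field `g(x) = (0, 0, 1)ᵀ` of the 3D example. -/
def exG : VF 3 := fun _ => (EuclideanSpace.equiv (Fin 3) ℝ).symm ![0, 0, 1]

/-- The Lyapunov function `V(x) = ½(x₁² + x₂² + x₃²)`. -/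
def exV : Euc 3 → ℝ := fun x => (1 / 2) * (x 0 ^ 2 + x 1 ^ 2 + x 2 ^ 2)

/-! With `V = ½‖x‖²` one has `(XV)(x) = ⟪x, X x⟫`, and since `f` has no third component and
`g = ∂/∂x₃`, all the derivatives are explicit. `fV = x₁x₂(α − β)(x₃)` and
`f²V = (α − β)(x₃)(x₂²α(x₃) − x₁²β(x₃))`; differentiating once more along `f` does not touch the
factor `(α − β)(x₃)`, so `f³V` is still a multiple of it, and all three vanish on `x₃ = 0`.
Moreover `[g,f]` is `f` with `α, β` replaced by `α′, β′`, and the bracket of two fields of this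
shape is `(βα′ − αβ′)(x₃)(x₁, −x₂, 0)`. On `x₃ = 0` this gives `[f,g]V = x₁x₂(β′ − α′)(0)` and
`[[g,f],f]V = α(0)(α′ − β′)(0)(x₁² − x₂²)`, which cannot both vanish when `x ≠ 0`. -/

lemma vfD_neg {n : ℕ} (X : VF n) (V : Euc n → ℝ) : vfD (-X) V = -vfD X V := by
  funext x
  simp [vfD]

lemma hasFDerivAt_coord (i : Fin 3) (x : Euc 3) :
    HasFDerivAt (fun y : Euc 3 => y i) (EuclideanSpace.proj i : Euc 3 →L[ℝ] ℝ) x :=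
  PiLp.hasFDerivAt_apply _ _ _

lemma hasFDerivAt_comp_coord {a : ℝ → ℝ} (i : Fin 3) {x : Euc 3}
    (ha : DifferentiableAt ℝ a (x i)) :
    HasFDerivAt (fun y : Euc 3 => a (y i))
      (deriv a (x i) • (EuclideanSpace.proj i : Euc 3 →L[ℝ] ℝ)) x :=
  ha.hasDerivAt.comp_hasFDerivAt x (hasFDerivAt_coord i x)

lemma exF_eq_sub_smul_single (a b : ℝ → ℝ) : exF a b = fun y =>
    (y 1 * a (y 2)) • EuclideanSpace.single 0 1 - (y 0 * b (y 2)) • EuclideanSpace.single 1 1 := by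
  funext y
  ext i
  fin_cases i <;> simp [exF]

lemma fderiv_exF_apply {a b : ℝ → ℝ} {x : Euc 3} (ha : DifferentiableAt ℝ a (x 2))
    (hb : DifferentiableAt ℝ b (x 2)) (v : Euc 3) :
    fderiv ℝ (exF a b) x v = (EuclideanSpace.equiv (Fin 3) ℝ).symm
      ![v 1 * a (x 2) + x 1 * deriv a (x 2) * v 2,
        -(v 0 * b (x 2) + x 0 * deriv b (x 2) * v 2), 0] := by
  have h := (((hasFDerivAt_coord 1 x).fun_mul (hasFDerivAt_comp_coord 2 ha)).smul_const
    (EuclideanSpace.single (0 : Fin 3) (1 : ℝ))).fun_sub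
    (((hasFDerivAt_coord 0 x).fun_mul (hasFDerivAt_comp_coord 2 hb)).smul_const
    (EuclideanSpace.single (1 : Fin 3) (1 : ℝ)))
  rw [exF_eq_sub_smul_single, h.fderiv]
  ext i
  fin_cases i <;> simp <;> ring

lemma vfD_exV (X : VF 3) (x : Euc 3) :
    vfD X exV x = x 0 * X x 0 + x 1 * X x 1 + x 2 * X x 2 := by
  have hV : exV = fun y => (1 / 2 : ℝ) * ‖y‖ ^ 2 := by
    funext y
    simp [exV, EuclideanSpace.norm_sq_eq, Fin.sum_univ_three]
  rw [vfD, hV, ((hasStrictFDerivAt_norm_sq x).hasFDerivAt.const_mul (1 / 2 : ℝ)).fderiv]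
  simp only [one_div, smul_apply, coe_innerSL_apply, PiLp.inner_apply, RCLike.inner_apply,
    Real.ringHom_apply, Fin.sum_univ_three, smul_add, nsmul_eq_mul, Nat.cast_ofNat, smul_eq_mul]
  ring

lemma vfD_exF_exV (a b : ℝ → ℝ) :
    vfD (exF a b) exV = fun y => y 0 * y 1 * (a (y 2) - b (y 2)) := by
  funext y
  simp only [vfD_exV, exF, PiLp.continuousLinearEquiv_symm_apply, Matrix.cons_val_zero,
    Matrix.cons_val_one, mul_neg, Matrix.cons_val, mul_zero, add_zero]
  ring

lemma vfD_exF_mul_sub {a b : ℝ → ℝ} (ha : Differentiable ℝ a) (hb : Differentiable ℝ b) :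
    vfD (exF a b) (fun y => y 0 * y 1 * (a (y 2) - b (y 2))) =
      fun y => (a (y 2) - b (y 2)) * (y 1 ^ 2 * a (y 2) - y 0 ^ 2 * b (y 2)) := by
  funext y
  have h := ((hasFDerivAt_coord 0 y).fun_mul (hasFDerivAt_coord 1 y)).fun_mul
    ((hasFDerivAt_comp_coord 2 (ha (y 2))).fun_sub (hasFDerivAt_comp_coord 2 (hb (y 2))))
  rw [vfD, h.fderiv]
  simp only [smul_add, exF, PiLp.continuousLinearEquiv_symm_apply, add_apply, smul_apply,
    sub_apply, PiLp.proj_apply, Matrix.cons_val, smul_eq_mul, mul_zero, sub_self,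
    Matrix.cons_val_one, Matrix.cons_val_zero, mul_neg, zero_add]
  ring

lemma fderiv_comp_coord_mul_apply_eq_zero {c : ℝ → ℝ} {Q : Euc 3 → ℝ} {x v : Euc 3}
    (hc : DifferentiableAt ℝ c (x 2)) (hQ : DifferentiableAt ℝ Q x)
    (hcx : c (x 2) = 0) (hv : v 2 = 0) :
    fderiv ℝ (fun y => c (y 2) * Q y) x v = 0 := by
  rw [((hasFDerivAt_comp_coord 2 hc).fun_mul hQ.hasFDerivAt).fderiv]
  simp [hcx, hv]

lemma iterD_exF_exV_three_eq_zero {a b : ℝ → ℝ} (ha : Differentiable ℝ a)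
    (hb : Differentiable ℝ b) {x : Euc 3} (hx : a (x 2) = b (x 2)) :
    iterD (exF a b) exV 3 x = 0 := by
  simp only [iterD, vfD_exF_exV, vfD_exF_mul_sub ha hb]
  refine fderiv_comp_coord_mul_apply_eq_zero ((ha _).sub (hb _)) (by fun_prop)
    (sub_eq_zero.2 hx) rfl

lemma fderiv_exG (x : Euc 3) : fderiv ℝ exG x = 0 :=
  fderiv_const_apply _

lemma lieB_exG_exF {a b : ℝ → ℝ} (ha : Differentiable ℝ a) (hb : Differentiable ℝ b) :
    lieB exG (exF a b) = exF (deriv a) (deriv b) := by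
  funext y
  rw [lieB, fderiv_exF_apply (ha _) (hb _), fderiv_exG]
  ext i
  fin_cases i <;> simp [exG, exF]

lemma lieB_exF_exG {a b : ℝ → ℝ} (ha : Differentiable ℝ a) (hb : Differentiable ℝ b) :
    lieB (exF a b) exG = -exF (deriv a) (deriv b) := by
  rw [← lieB_exG_exF ha hb]
  funext y
  simp [lieB]

lemma lieB_exF_exF {a b c d : ℝ → ℝ} {x : Euc 3} (ha : DifferentiableAt ℝ a (x 2))
    (hb : DifferentiableAt ℝ b (x 2)) (hc : DifferentiableAt ℝ c (x 2))
    (hd : DifferentiableAt ℝ d (x 2)) :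
    lieB (exF c d) (exF a b) x = (b (x 2) * c (x 2) - a (x 2) * d (x 2)) •
      (EuclideanSpace.equiv (Fin 3) ℝ).symm ![x 0, -x 1, 0] := by
  rw [lieB, fderiv_exF_apply ha hb, fderiv_exF_apply hc hd]
  ext i
  fin_cases i <;> simp [exF] <;> ring

lemma eq_zero_and_eq_zero_of_mul_eq_zero_of_sq_sub_sq_eq_zero {u w : ℝ} (h : u * w = 0)
    (h' : u ^ 2 - w ^ 2 = 0) : u = 0 ∧ w = 0 := by
  rcases mul_eq_zero.1 h with hu | hw
  · subst hu
    exact ⟨rfl, pow_eq_zero_iff two_ne_zero |>.1 (by linarith)⟩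
  · subst hw
    exact ⟨pow_eq_zero_iff two_ne_zero |>.1 (by linarith), rfl⟩

/-- For the 3D example, at every `x ≠ 0` with `x₃ = 0`:
`(gV)(x) = (fV)(x) = (f²V)(x) = (f³V)(x) = 0`, and if `([f,g]V)(x) = 0` then
`([[g,f],f]V)(x) ≠ 0`. -/
theorem stmt17 (α β : ℝ → ℝ) (hα : ContDiff ℝ 2 α) (hβ : ContDiff ℝ 2 β)
    (hab : α 0 = β 0) (ha0 : α 0 ≠ 0) (hd : deriv α 0 ≠ deriv β 0) :
    ∀ x : Euc 3, x ≠ 0 → x 2 = 0 →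
      vfD exG exV x = 0 ∧
      iterD (exF α β) exV 1 x = 0 ∧
      iterD (exF α β) exV 2 x = 0 ∧
      iterD (exF α β) exV 3 x = 0 ∧
      (vfD (lieB (exF α β) exG) exV x = 0 →
        vfD (lieB (lieB exG (exF α β)) (exF α β)) exV x ≠ 0) := by
  have hα₁ : Differentiable ℝ α := hα.differentiable two_ne_zero
  have hβ₁ : Differentiable ℝ β := hβ.differentiable two_ne_zero
  intro x hx hx₂
  refine ⟨by simp [vfD_exV, exG, hx₂], by simp [iterD, vfD_exF_exV, hx₂, hab],
    by simp [iterD, vfD_exF_exV, vfD_exF_mul_sub hα₁ hβ₁, hx₂, hab],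
    iterD_exF_exV_three_eq_zero hα₁ hβ₁ (by rw [hx₂, hab]), fun hfg => ?_⟩
  have hx01 : x 0 * x 1 = 0 := by
    simp only [lieB_exF_exG hα₁ hβ₁, vfD_neg, vfD_exF_exV, hx₂, Pi.neg_apply, neg_eq_zero] at hfg
    exact (mul_eq_zero.1 hfg).resolve_right (sub_ne_zero.2 hd)
  rw [lieB_exG_exF hα₁ hβ₁, vfD_exV, lieB_exF_exF (hα₁ _) (hβ₁ _)
    (hα.differentiable_deriv_two _) (hβ.differentiable_deriv_two _)]
  have hc : β 0 * deriv α 0 - α 0 * deriv β 0 ≠ 0 := by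
    rw [← hab, ← mul_sub]
    exact mul_ne_zero ha0 (sub_ne_zero.2 hd)
  have hsq : x 0 ^ 2 - x 1 ^ 2 ≠ 0 := fun hsq => hx <| by
    obtain ⟨h₀, h₁⟩ := eq_zero_and_eq_zero_of_mul_eq_zero_of_sq_sub_sq_eq_zero hx01 hsq
    ext i
    fin_cases i <;> simp [h₀, h₁, hx₂]
  convert mul_ne_zero hc hsq using 1
  simp only [hx₂, PiLp.continuousLinearEquiv_symm_apply, PiLp.smul_apply, Matrix.cons_val_zero,
    smul_eq_mul, Matrix.cons_val_one, mul_neg, Matrix.cons_val, mul_zero, add_zero]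
  ring
end
end
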